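/- arXiv:2304.09940 — 9 statements merged into one kernel-verified Lean document; each statement's English description precedes it below -/
import Mathlib

section
/- For every nonnegative integer n there exists a polynomial P_n of degree n with real coefficients such that cos((2n+1)x) = (-1)^n · P_n(cos²(x))·cos(x) for all real x, and moreover the same polynomial P_n works in the identity sin((2n+1)x) = P_n(sin²(x))·sin(x). -/
/-!
Since `2 cos 2x = 2 - 4 sin² x`, the identity `sin((k+2)x) + sin((k-2)x) = 2 cos 2x · sin(kx)`
gives a three-term recurrence `P_{n+2} = (2 - 4X) P_{n+1} - P_n` for polynomials with
`sin((2n+1)x) = P_n(sin² x) sin x`, starting from `P_0 = 1`, `P_1 = 3 - 4X`; the recurrence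
raises the degree by one. Substituting `x + π/2` for `x` turns `sin² x` into `cos² x` and
`sin((2n+1)x)` into `(-1)ⁿ cos((2n+1)x)`.
-/

open Polynomial Real

noncomputable def sinOddMulPoly : ℕ → ℝ[X]
  | 0 => 1
  | 1 => 3 - 4 * X
  | n + 2 => (2 - 4 * X) * sinOddMulPoly (n + 1) - sinOddMulPoly n

theorem degree_sinOddMulPoly : ∀ n : ℕ, (sinOddMulPoly n).degree = n
  | 0 => by simp [sinOddMulPoly]
  | 1 => by rw [sinOddMulPoly]; compute_degree!
  | n + 2 => by
    have hlin : (2 - 4 * X : ℝ[X]).degree = 1 := by compute_degree!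
    have hprod : ((2 - 4 * X) * sinOddMulPoly (n + 1)).degree = ↑(n + 2) := by
      rw [degree_mul, hlin, degree_sinOddMulPoly (n + 1)]
      norm_cast
      omega
    rw [sinOddMulPoly, degree_sub_eq_left_of_degree_lt, hprod]
    rw [hprod, degree_sinOddMulPoly n]
    exact_mod_cast (by omega : n < n + 2)

theorem sin_add_add_sin_sub (y z : ℝ) : sin (y + z) + sin (y - z) = 2 * sin y * cos z := by
  rw [sin_add, sin_sub]
  ring

theorem sin_odd_mul_eq_eval_sinOddMulPoly :
    ∀ (n : ℕ) (x : ℝ), sin ((2 * n + 1) * x) = (sinOddMulPoly n).eval (sin x ^ 2) * sin x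
  | 0, x => by simp [sinOddMulPoly]
  | 1, x => by
    rw [sinOddMulPoly, show (2 * ((1 : ℕ) : ℝ) + 1) * x = 3 * x by norm_num, sin_three_mul]
    simp only [eval_sub, eval_mul, eval_X, eval_ofNat]
    ring
  | n + 2, x => by
    have hrec := sin_add_add_sin_sub ((2 * ↑(n + 1) + 1) * x) (2 * x)
    rw [show (2 * ↑(n + 1) + 1) * x + 2 * x = (2 * ↑(n + 2) + 1) * x by push_cast; ring,
      show (2 * ↑(n + 1) + 1) * x - 2 * x = (2 * (n : ℝ) + 1) * x by push_cast; ring,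
      sin_odd_mul_eq_eval_sinOddMulPoly n, sin_odd_mul_eq_eval_sinOddMulPoly (n + 1),
      cos_two_mul', cos_sq'] at hrec
    rw [sinOddMulPoly, eq_sub_of_add_eq hrec]
    simp only [eval_sub, eval_mul, eval_X, eval_ofNat]
    ring

theorem sin_odd_mul_add_pi_div_two (n : ℕ) (x : ℝ) :
    sin ((2 * n + 1) * (x + π / 2)) = (-1) ^ n * cos ((2 * n + 1) * x) := by
  rw [show (2 * n + 1) * (x + π / 2) = (2 * n + 1) * x + n * π + π / 2 by ring,
    sin_add_pi_div_two, cos_add_nat_mul_pi]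

theorem cos_odd_multiple_poly (n : ℕ) :
    ∃ P : Polynomial ℝ, P.degree = n ∧
      (∀ x : ℝ, Real.cos ((2 * n + 1) * x) =
        (-1 : ℝ) ^ n * P.eval (Real.cos x ^ 2) * Real.cos x) ∧
      (∀ x : ℝ, Real.sin ((2 * n + 1) * x) = P.eval (Real.sin x ^ 2) * Real.sin x) := by
  refine ⟨sinOddMulPoly n, degree_sinOddMulPoly n, fun x => ?_,
    sin_odd_mul_eq_eval_sinOddMulPoly n⟩
  have h := sin_odd_mul_eq_eval_sinOddMulPoly n (x + π / 2)
  rw [sin_odd_mul_add_pi_div_two, sin_add_pi_div_two] at h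
  calc cos ((2 * n + 1) * x)
      = (-1) ^ n * ((-1) ^ n * cos ((2 * n + 1) * x)) := by
        rw [← mul_assoc, ← mul_pow, neg_one_mul, neg_neg, one_pow, one_mul]
    _ = (-1) ^ n * (sinOddMulPoly n).eval (cos x ^ 2) * cos x := by rw [h, mul_assoc]
end

section
/- If P_n is the polynomial satisfying sin((2n+1)x) = P_n(sin²(x))·sin(x) for all real x, then P_{n+1}(t²) = P_n(t²)(1 - 2t²) + 2(-1)^n P_n(1 - t²)(1 - t²) for all real t. -/
/-!
Shifting `x` to `π/2 - x` turns the defining identity of `P n` into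
`cos ((2n+1)x) = (-1)ⁿ P_n(cos² x) cos x`. Expanding `sin ((2n+1)x + 2x)` with the addition
formula then gives the claimed identity at `t = sin x`, for every `x`. Both sides are polynomials
in `t²` that agree on the infinite set `(0, 1]`, so they agree everywhere.
-/

open Polynomial Real

theorem cos_odd_mul_eq_of_sin_odd_mul_eq {n : ℕ} {p : ℝ[X]}
    (hp : ∀ x : ℝ, sin ((2 * n + 1) * x) = p.eval (sin x ^ 2) * sin x) (x : ℝ) :
    cos ((2 * n + 1) * x) = (-1) ^ n * p.eval (cos x ^ 2) * cos x := by
  have hshift := hp (π / 2 - x)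
  rw [show (2 * (n : ℝ) + 1) * (π / 2 - x) = π / 2 - (2 * n + 1) * x + n * π by ring,
    sin_add_nat_mul_pi, sin_pi_div_two_sub, sin_pi_div_two_sub] at hshift
  calc cos ((2 * n + 1) * x)
      = ((-1) ^ n * (-1) ^ n : ℝ) * cos ((2 * n + 1) * x) := by
        rw [← mul_pow, neg_one_mul, neg_neg, one_pow, one_mul]
    _ = (-1) ^ n * p.eval (cos x ^ 2) * cos x := by rw [mul_assoc, hshift, mul_assoc]

theorem Polynomial.eq_of_eval_sin_sq_mul_sin_eq {p q : ℝ[X]}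
    (h : ∀ x : ℝ, p.eval (sin x ^ 2) * sin x = q.eval (sin x ^ 2) * sin x) : p = q := by
  refine eq_of_infinite_eval_eq p q ((Set.Ioc_infinite zero_lt_one).mono fun u hu => ?_)
  obtain ⟨hu0, hu1⟩ := hu
  have hsin : sin (arcsin (√u)) = √u :=
    sin_arcsin (by linarith [sqrt_nonneg u]) (sqrt_le_one.mpr hu1)
  have hsq : √u ^ 2 = u := sq_sqrt hu0.le
  have := h (arcsin (√u))
  rw [hsin, hsq] at this
  exact mul_right_cancel₀ (sqrt_pos.mpr hu0).ne' this

theorem poly_recurrence (P : ℕ → Polynomial ℝ)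
    (hP : ∀ n : ℕ, ∀ x : ℝ,
      Real.sin ((2 * n + 1) * x) = (P n).eval (Real.sin x ^ 2) * Real.sin x) :
    ∀ n : ℕ, ∀ t : ℝ,
      (P (n + 1)).eval (t ^ 2) =
        (P n).eval (t ^ 2) * (1 - 2 * t ^ 2)
          + 2 * (-1 : ℝ) ^ n * (P n).eval (1 - t ^ 2) * (1 - t ^ 2) := by
  intro n t
  have hstep : P (n + 1) =
      P n * (1 - 2 * X) + C (2 * (-1) ^ n) * (P n).comp (1 - X) * (1 - X) := by
    refine eq_of_eval_sin_sq_mul_sin_eq fun x => ?_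
    have hsin := hP (n + 1) x
    push_cast at hsin
    rw [← hsin, show (2 * ((n : ℝ) + 1) + 1) * x = (2 * n + 1) * x + 2 * x by ring, sin_add,
      sin_two_mul, cos_two_mul, hP, cos_odd_mul_eq_of_sin_odd_mul_eq (hP n), cos_sq']
    simp only [eval_add, eval_mul, eval_sub, eval_one, eval_C, eval_X, eval_comp, eval_ofNat]
    linear_combination 2 * (-1) ^ n * sin x * (P n).eval (1 - sin x ^ 2) * cos_sq' x
  rw [hstep]
  simp only [eval_add, eval_mul, eval_sub, eval_one, eval_C, eval_X, eval_comp, eval_ofNat]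
end

section
/- Let f(t) = c₁·exp(i m t) + c₂·exp(i ℓ t) with c₁, c₂ ∈ ℝ nonzero, m, ℓ integers, ℓ > m. If |f(t₁)| = |f(t₂)|, then there exists an integer s with 0 ≤ s ≤ ℓ-m-1 such that either t₁ ≡ t₂ + 2sπ/(ℓ-m) (mod 2π) or t₁ ≡ -t₂ + 2sπ/(ℓ-m) (mod 2π). -/
/-!
Expanding the modulus gives `|f t|² = c₁² + c₂² + 2 c₁ c₂ cos ((ℓ - m) t)`,
so `|f t₁| = |f t₂|` with `c₁ c₂ ≠ 0` forces `cos ((ℓ - m) t₁) = cos ((ℓ - m) t₂)`, i.e. `(ℓ - m) t₁ = ±(ℓ - m) t₂ + 2πn`.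
Dividing by `ℓ - m` and writing `n = (ℓ - m) k + s` with `0 ≤ s < ℓ - m` yields the congruence.
-/

open Real

theorem norm_sq_add_exp_mul_I (c₁ c₂ a b t : ℝ) :
    ‖c₁ * Complex.exp (Complex.I * a * t) + c₂ * Complex.exp (Complex.I * b * t)‖ ^ 2
      = c₁ ^ 2 + c₂ ^ 2 + 2 * c₁ * c₂ * cos ((b - a) * t) := by
  have exp_eq (x : ℝ) :
      Complex.exp (Complex.I * x * t) = cos (x * t) + sin (x * t) * Complex.I := by
    rw [show Complex.I * x * t = ((x * t : ℝ) : ℂ) * Complex.I by push_cast; ring,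
      Complex.exp_mul_I, ← Complex.ofReal_cos, ← Complex.ofReal_sin]
  rw [exp_eq, exp_eq, Complex.sq_norm, Complex.normSq_apply, sub_mul, cos_sub]
  simp only [Complex.add_re, Complex.add_im, Complex.mul_re, Complex.mul_im,
    Complex.ofReal_re, Complex.ofReal_im, Complex.I_re, Complex.I_im]
  linear_combination c₁ ^ 2 * sin_sq_add_cos_sq (a * t) + c₂ ^ 2 * sin_sq_add_cos_sq (b * t)

theorem exists_sub_eq_of_mul_eq_mul_add {d : ℤ} (hd : 0 < d) {u v : ℝ} {n : ℤ}
    (h : d * u = d * v + n * (2 * π)) :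
    ∃ s : ℤ, 0 ≤ s ∧ s ≤ d - 1 ∧ ∃ k : ℤ, u - (v + 2 * s * π / d) = k * (2 * π) := by
  refine ⟨n % d, Int.emod_nonneg _ hd.ne', by linarith [Int.emod_lt_of_pos n hd], n / d, ?_⟩
  have hdR : (d : ℝ) ≠ 0 := by exact_mod_cast hd.ne'
  have hdiv : (d : ℝ) * (n / d : ℤ) + (n % d : ℤ) = n := by
    exact_mod_cast Int.mul_ediv_add_emod n d
  apply mul_left_cancel₀ hdR
  field_simp
  linear_combination h - 2 * π * hdiv

theorem abs_eq_implies_congruence (c₁ c₂ : ℝ) (hc₁ : c₁ ≠ 0) (hc₂ : c₂ ≠ 0)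
    (m ℓ : ℤ) (hml : m < ℓ)
    (f : ℝ → ℂ)
    (hf : ∀ t : ℝ, f t = c₁ * Complex.exp (Complex.I * m * t)
      + c₂ * Complex.exp (Complex.I * ℓ * t))
    (t₁ t₂ : ℝ) (habs : ‖f t₁‖ = ‖f t₂‖) :
    ∃ s : ℤ, 0 ≤ s ∧ s ≤ ℓ - m - 1 ∧
      ((∃ n : ℤ, t₁ - (t₂ + 2 * s * Real.pi / (ℓ - m)) = n * (2 * Real.pi)) ∨
       (∃ n : ℤ, t₁ - (-t₂ + 2 * s * Real.pi / (ℓ - m)) = n * (2 * Real.pi))) := by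
  have hd : 0 < ℓ - m := sub_pos.mpr hml
  have hnorm (t : ℝ) :
      ‖f t‖ ^ 2 = c₁ ^ 2 + c₂ ^ 2 + 2 * c₁ * c₂ * cos (((ℓ - m : ℤ) : ℝ) * t) := by
    have := norm_sq_add_exp_mul_I c₁ c₂ m ℓ t
    push_cast at this ⊢
    rw [hf, this]
  have hcos : cos (((ℓ - m : ℤ) : ℝ) * t₁) = cos (((ℓ - m : ℤ) : ℝ) * t₂) := by
    have := hnorm t₁
    rw [habs, hnorm t₂] at this
    exact (mul_left_cancel₀ (by positivity) (add_left_cancel this)).symm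
  obtain ⟨k, hk | hk⟩ := cos_eq_cos_iff.mp hcos
  · obtain ⟨s, hs₀, hs₁, n, hn⟩ :=
      exists_sub_eq_of_mul_eq_mul_add hd (u := t₁) (v := t₂) (n := -k)
        (by push_cast at hk ⊢; linarith)
    exact ⟨s, hs₀, hs₁, Or.inl ⟨n, by exact_mod_cast hn⟩⟩
  · obtain ⟨s, hs₀, hs₁, n, hn⟩ :=
      exists_sub_eq_of_mul_eq_mul_add hd (u := t₁) (v := -t₂) (n := k)
        (by push_cast at hk ⊢; linarith)
    exact ⟨s, hs₀, hs₁, Or.inr ⟨n, by exact_mod_cast hn⟩⟩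
end

section
/- Let φ(t) = c₁ cos(mt) + c₂ cos(ℓt) and ψ(t) = c₁ sin(mt) + c₂ sin(ℓt) with c₁, c₂ nonzero reals and m, ℓ nonzero integers, ℓ > m, ℓ ≠ -m. If there exists t₀ with φ'(t₀) = 0 and ψ'(t₀) = 0, then (m c₁)² = (ℓ c₂)². -/
/-! The curve is `t ↦ c₁ e^{imt} + c₂ e^{iℓt}`, so a vanishing velocity at `t₀` means
`m c₁ e^{imt₀} = -ℓ c₂ e^{iℓt₀}`; comparing moduli gives `(m c₁)² = (ℓ c₂)²`. -/

open Real

theorem hasDerivAt_const_mul_cos_mul (c a t : ℝ) :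
    HasDerivAt (fun t => c * cos (a * t)) (-(a * c * sin (a * t))) t :=
  (((hasDerivAt_id' t).const_mul a).cos.const_mul c).congr_deriv (by ring)

theorem hasDerivAt_const_mul_sin_mul (c a t : ℝ) :
    HasDerivAt (fun t => c * sin (a * t)) (a * c * cos (a * t)) t :=
  (((hasDerivAt_id' t).const_mul a).sin.const_mul c).congr_deriv (by ring)

theorem sq_eq_sq_of_cos_add_cos_of_sin_add_sin {p q x y : ℝ}
    (hcos : p * cos x + q * cos y = 0) (hsin : p * sin x + q * sin y = 0) :
    p ^ 2 = q ^ 2 := by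
  linear_combination (p * cos x - q * cos y) * hcos + (p * sin x - q * sin y) * hsin
    - p ^ 2 * sin_sq_add_cos_sq x + q ^ 2 * sin_sq_add_cos_sq y

theorem singular_point_necessary_condition_general (c₁ c₂ : ℝ)
    (m ℓ : ℤ)
    (φ ψ : ℝ → ℝ)
    (hφ : ∀ t : ℝ, φ t = c₁ * Real.cos (m * t) + c₂ * Real.cos (ℓ * t))
    (hψ : ∀ t : ℝ, ψ t = c₁ * Real.sin (m * t) + c₂ * Real.sin (ℓ * t))
    (t₀ : ℝ) (h₁ : deriv φ t₀ = 0) (h₂ : deriv ψ t₀ = 0) :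
    (m * c₁) ^ 2 = (ℓ * c₂) ^ 2 := by
  obtain rfl : φ = _ := funext hφ
  obtain rfl : ψ = _ := funext hψ
  rw [((hasDerivAt_const_mul_cos_mul c₁ m t₀).fun_add
    (hasDerivAt_const_mul_cos_mul c₂ ℓ t₀)).deriv] at h₁
  rw [((hasDerivAt_const_mul_sin_mul c₁ m t₀).fun_add
    (hasDerivAt_const_mul_sin_mul c₂ ℓ t₀)).deriv] at h₂
  exact sq_eq_sq_of_cos_add_cos_of_sin_add_sin h₂ (by linarith)

theorem singular_point_necessary_condition (c₁ c₂ : ℝ) (hc₁ : c₁ ≠ 0) (hc₂ : c₂ ≠ 0)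
    (m ℓ : ℤ) (hm : m ≠ 0) (hl : ℓ ≠ 0) (hml : m < ℓ) (hlm : ℓ ≠ -m)
    (φ ψ : ℝ → ℝ)
    (hφ : ∀ t : ℝ, φ t = c₁ * Real.cos (m * t) + c₂ * Real.cos (ℓ * t))
    (hψ : ∀ t : ℝ, ψ t = c₁ * Real.sin (m * t) + c₂ * Real.sin (ℓ * t))
    (t₀ : ℝ) (h₁ : deriv φ t₀ = 0) (h₂ : deriv ψ t₀ = 0) :
    (m * c₁) ^ 2 = (ℓ * c₂) ^ 2 :=
  singular_point_necessary_condition_general c₁ c₂ m ℓ φ ψ hφ hψ t₀ h₁ h₂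
end

section
/- Let φ(t) = c₁ cos(mt) + c₂ cos(ℓt), ψ(t) = c₁ sin(mt) + c₂ sin(ℓt), with c₁, c₂ nonzero reals, m, ℓ nonzero integers, ℓ > m, ℓ ≠ -m. At any point t where φ'(t) = ψ'(t) = 0, one has φ''(t)² + ψ''(t)² ≠ 0. -/
/-!
At a singular point the vanishing first derivatives let one trade the `m`-terms of the second
derivatives for `ℓ`-terms, so that `(φ'', ψ'') = c₂ ℓ (m - ℓ) (cos ℓt, sin ℓt)`. Hence
`φ''² + ψ''² = (c₂ ℓ (m - ℓ))²`, which is nonzero since `c₂ ≠ 0`, `ℓ ≠ 0` and `m ≠ ℓ`.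
-/

open Real

lemma deriv_cos_mul_add_cos_mul (a b k l : ℝ) :
    deriv (fun t => a * cos (k * t) + b * cos (l * t)) =
      fun t => -(a * k) * sin (k * t) + -(b * l) * sin (l * t) := by
  funext x
  refine HasDerivAt.deriv ?_
  refine ((((hasDerivAt_id x).const_mul k).cos.const_mul a).add
    (((hasDerivAt_id x).const_mul l).cos.const_mul b)).congr_deriv ?_
  simp only [id]; ring

lemma deriv_sin_mul_add_sin_mul (a b k l : ℝ) :
    deriv (fun t => a * sin (k * t) + b * sin (l * t)) =
      fun t => a * k * cos (k * t) + b * l * cos (l * t) := by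
  funext x
  refine HasDerivAt.deriv ?_
  refine ((((hasDerivAt_id x).const_mul k).sin.const_mul a).add
    (((hasDerivAt_id x).const_mul l).sin.const_mul b)).congr_deriv ?_
  simp only [id]; ring

lemma sq_add_sq_second_deriv_of_deriv_eq_zero {a b k l t : ℝ}
    (h₁ : -(a * k) * sin (k * t) + -(b * l) * sin (l * t) = 0)
    (h₂ : a * k * cos (k * t) + b * l * cos (l * t) = 0) :
    (-(a * k) * k * cos (k * t) + -(b * l) * l * cos (l * t)) ^ 2 +
      (-(a * k * k) * sin (k * t) + -(b * l * l) * sin (l * t)) ^ 2 = (b * l * (k - l)) ^ 2 := by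
  have hx : -(a * k) * k * cos (k * t) + -(b * l) * l * cos (l * t) =
      b * l * (k - l) * cos (l * t) := by linear_combination (-k) * h₂
  have hy : -(a * k * k) * sin (k * t) + -(b * l * l) * sin (l * t) =
      b * l * (k - l) * sin (l * t) := by linear_combination k * h₁
  rw [hx, hy]
  linear_combination (b * l * (k - l)) ^ 2 * cos_sq_add_sin_sq (l * t)

theorem singular_points_are_double_general (c₁ c₂ : ℝ) (hc₂ : c₂ ≠ 0)
    (m ℓ : ℤ) (hl : ℓ ≠ 0) (hml : m < ℓ)
    (φ ψ : ℝ → ℝ)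
    (hφ : ∀ t : ℝ, φ t = c₁ * Real.cos (m * t) + c₂ * Real.cos (ℓ * t))
    (hψ : ∀ t : ℝ, ψ t = c₁ * Real.sin (m * t) + c₂ * Real.sin (ℓ * t))
    (t : ℝ) (h₁ : deriv φ t = 0) (h₂ : deriv ψ t = 0) :
    deriv (deriv φ) t ^ 2 + deriv (deriv ψ) t ^ 2 ≠ 0 := by
  have hφ' := deriv_cos_mul_add_cos_mul c₁ c₂ m ℓ
  have hψ' := deriv_sin_mul_add_sin_mul c₁ c₂ m ℓ
  rw [← funext hφ] at hφ'
  rw [← funext hψ] at hψ'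
  rw [hφ'] at h₁ ⊢
  rw [hψ'] at h₂ ⊢
  rw [deriv_sin_mul_add_sin_mul, deriv_cos_mul_add_cos_mul,
    sq_add_sq_second_deriv_of_deriv_eq_zero h₁ h₂]
  have hml' : (m : ℝ) - ℓ ≠ 0 := sub_ne_zero.mpr (by exact_mod_cast hml.ne)
  exact pow_ne_zero 2 (mul_ne_zero (mul_ne_zero hc₂ (by exact_mod_cast hl)) hml')

theorem singular_points_are_double (c₁ c₂ : ℝ) (hc₁ : c₁ ≠ 0) (hc₂ : c₂ ≠ 0)
    (m ℓ : ℤ) (hm : m ≠ 0) (hl : ℓ ≠ 0) (hml : m < ℓ) (hlm : ℓ ≠ -m)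
    (φ ψ : ℝ → ℝ)
    (hφ : ∀ t : ℝ, φ t = c₁ * Real.cos (m * t) + c₂ * Real.cos (ℓ * t))
    (hψ : ∀ t : ℝ, ψ t = c₁ * Real.sin (m * t) + c₂ * Real.sin (ℓ * t))
    (t : ℝ) (h₁ : deriv φ t = 0) (h₂ : deriv ψ t = 0) :
    deriv (deriv φ) t ^ 2 + deriv (deriv ψ) t ^ 2 ≠ 0 :=
  singular_points_are_double_general c₁ c₂ hc₂ m ℓ hl hml φ ψ hφ hψ t h₁ h₂
end

section
/- Let m, ℓ be integers with ℓ > m, and c₁ ≠ 0 real with m c₁ = ℓ c₂. Set φ(t) = c₁ cos(mt) + c₂ cos(ℓt), ψ(t) = c₁ sin(mt) + c₂ sin(ℓt). Then φ'(t) = ψ'(t) = 0 if and only if cos(((ℓ-m)/2)·t) = 0, i.e. if and only if t ≡ (2k+1)π/(ℓ-m) (mod 2π) for some integer k with 0 ≤ k ≤ ℓ-m-1. -/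
/-! Since `ℓ c₂ = m c₁`, the derivatives are `φ' = -m c₁ (sin mt + sin ℓt)` and
`ψ' = m c₁ (cos mt + cos ℓt)`. By the sum-to-product formulas these are
`-2 m c₁ sin(A) cos(B)` and `2 m c₁ cos(A) cos(B)` with `A = (ℓ+m)t/2`, `B = (ℓ-m)t/2`;
as `sin A` and `cos A` never vanish together, both vanish exactly when `cos B = 0`.
The zeros `t = (2j+1)π/(ℓ-m)` of `cos B` are then sorted by the residue of `j` mod `ℓ-m`. -/

open Real

lemma sin_add_sin_eq_zero_and_cos_add_cos_eq_zero_iff (x y : ℝ) :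
    sin x + sin y = 0 ∧ cos x + cos y = 0 ↔ cos ((x - y) / 2) = 0 := by
  rw [sin_add_sin, cos_add_cos]
  constructor
  · rintro ⟨hsin, hcos⟩
    by_contra hB
    have hsA : sin ((x + y) / 2) = 0 := by simpa [hB] using hsin
    have hcA : cos ((x + y) / 2) = 0 := by simpa [hB] using hcos
    simpa [hsA, hcA] using sin_sq_add_cos_sq ((x + y) / 2)
  · intro hB
    simp [hB]

lemma deriv_const_mul_cos_mul_add (c₁ c₂ a b t : ℝ) :
    deriv (fun s => c₁ * cos (a * s) + c₂ * cos (b * s)) t =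
      -(c₁ * a * sin (a * t) + c₂ * b * sin (b * t)) := by
  have h := (((hasDerivAt_id t).const_mul a).cos.const_mul c₁).add
    (((hasDerivAt_id t).const_mul b).cos.const_mul c₂)
  simp only [id, mul_one] at h
  refine h.deriv.trans ?_
  ring

lemma deriv_const_mul_sin_mul_add (c₁ c₂ a b t : ℝ) :
    deriv (fun s => c₁ * sin (a * s) + c₂ * sin (b * s)) t =
      c₁ * a * cos (a * t) + c₂ * b * cos (b * t) := by
  have h := (((hasDerivAt_id t).const_mul a).sin.const_mul c₁).add
    (((hasDerivAt_id t).const_mul b).sin.const_mul c₂)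
  simp only [id, mul_one] at h
  refine h.deriv.trans ?_
  ring

lemma cos_half_mul_eq_zero_iff {d : ℤ} (hd : 0 < d) (t : ℝ) :
    cos ((d : ℝ) / 2 * t) = 0 ↔
      ∃ k : ℤ, 0 ≤ k ∧ k ≤ d - 1 ∧ ∃ n : ℤ, t - (2 * k + 1) * π / d = n * (2 * π) := by
  have hdR : (d : ℝ) ≠ 0 := by positivity
  rw [cos_eq_zero_iff]
  constructor
  · rintro ⟨j, hj⟩
    refine ⟨j % d, Int.emod_nonneg j hd.ne', by linarith [Int.emod_lt_of_pos j hd], j / d, ?_⟩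
    have ht : t = (2 * j + 1) * π / d := by
      rw [eq_div_iff hdR]
      linarith
    have hj_div : (j : ℝ) = d * ((j / d : ℤ) : ℝ) + ((j % d : ℤ) : ℝ) := by
      exact_mod_cast (Int.mul_ediv_add_emod j d).symm
    rw [ht, hj_div]
    field_simp
    ring
  · rintro ⟨k, -, -, n, hn⟩
    refine ⟨k + d * n, ?_⟩
    rw [eq_add_of_sub_eq hn]
    push_cast
    field_simp
    ring

theorem singular_points_case_positive (c₁ c₂ : ℝ) (hc₁ : c₁ ≠ 0)
    (m ℓ : ℤ) (hm : m ≠ 0) (hml : m < ℓ) (hc : (m : ℝ) * c₁ = (ℓ : ℝ) * c₂)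
    (φ ψ : ℝ → ℝ)
    (hφ : ∀ t : ℝ, φ t = c₁ * Real.cos (m * t) + c₂ * Real.cos (ℓ * t))
    (hψ : ∀ t : ℝ, ψ t = c₁ * Real.sin (m * t) + c₂ * Real.sin (ℓ * t))
    (t : ℝ) :
    ((deriv φ t = 0 ∧ deriv ψ t = 0) ↔ Real.cos (((ℓ : ℝ) - m) / 2 * t) = 0) ∧
    (Real.cos (((ℓ : ℝ) - m) / 2 * t) = 0 ↔
      ∃ k : ℤ, 0 ≤ k ∧ k ≤ ℓ - m - 1 ∧
        ∃ n : ℤ, t - (2 * k + 1) * Real.pi / (ℓ - m) = n * (2 * Real.pi)) := by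
  have hmc₁ : (m : ℝ) * c₁ ≠ 0 := mul_ne_zero (Int.cast_ne_zero.mpr hm) hc₁
  have hφ' : deriv φ t = -(m * c₁) * (sin (ℓ * t) + sin (m * t)) := by
    rw [funext hφ, deriv_const_mul_cos_mul_add]
    linear_combination sin (ℓ * t) * hc
  have hψ' : deriv ψ t = m * c₁ * (cos (ℓ * t) + cos (m * t)) := by
    rw [funext hψ, deriv_const_mul_sin_mul_add]
    linear_combination -cos (ℓ * t) * hc
  have hB : ((ℓ : ℝ) - m) / 2 * t = (ℓ * t - m * t) / 2 := by ring
  refine ⟨?_, ?_⟩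
  · rw [hφ', hψ', hB, ← sin_add_sin_eq_zero_and_cos_add_cos_eq_zero_iff]
    simp only [mul_eq_zero, neg_eq_zero, hmc₁, false_or]
  · exact_mod_cast cos_half_mul_eq_zero_iff (sub_pos.mpr hml) t
end

section
/- Let m, ℓ be integers with ℓ > m, and c₁ ≠ 0 real with m c₁ = -ℓ c₂. Set φ(t) = c₁ cos(mt) + c₂ cos(ℓt), ψ(t) = c₁ sin(mt) + c₂ sin(ℓt). Then φ'(t) = ψ'(t) = 0 if and only if sin(((ℓ-m)/2)·t) = 0, i.e. if and only if t ≡ 2kπ/(ℓ-m) (mod 2π) for some integer k with 0 ≤ k ≤ ℓ-m-1. -/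
/-!
The relation `m c₁ = -ℓ c₂` makes the derivatives `φ' = m c₁ (sin ℓt - sin mt)` and
`ψ' = m c₁ (cos mt - cos ℓt)`, so `t` is singular exactly when `ℓt` and `mt` define the same
angle, i.e. when `(ℓ - m) t / 2` is a multiple of `π`. Reducing the multiple modulo `ℓ - m`
gives the residue `k`.
-/

open Real

theorem sin_eq_sin_and_cos_eq_cos_iff_sin_half_sub_eq_zero (x y : ℝ) :
    sin x = sin y ∧ cos x = cos y ↔ sin ((x - y) / 2) = 0 := by
  rw [sin_eq_zero_iff]
  constructor
  · rintro ⟨hs, hc⟩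
    obtain ⟨n, hn⟩ := Angle.angle_eq_iff_two_pi_dvd_sub.mp (Angle.cos_sin_inj hc hs)
    exact ⟨n, by linarith⟩
  · rintro ⟨n, hn⟩
    have hx : x = y + n * (2 * π) := by linarith
    rw [hx, sin_add_int_mul_two_pi, cos_add_int_mul_two_pi]
    exact ⟨rfl, rfl⟩

theorem deriv_const_mul_cos_add_const_mul_cos (c₁ c₂ a b t : ℝ) :
    deriv (fun t => c₁ * cos (a * t) + c₂ * cos (b * t)) t =
      -(a * c₁ * sin (a * t) + b * c₂ * sin (b * t)) := by
  have hcos (c r : ℝ) : HasDerivAt (fun t => c * cos (r * t)) (-(r * c * sin (r * t))) t :=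
    (((hasDerivAt_id' t).const_mul r).cos.const_mul c).congr_deriv (by ring)
  exact ((hcos c₁ a).add (hcos c₂ b)).deriv.trans (neg_add _ _).symm

theorem deriv_const_mul_sin_add_const_mul_sin (c₁ c₂ a b t : ℝ) :
    deriv (fun t => c₁ * sin (a * t) + c₂ * sin (b * t)) t =
      a * c₁ * cos (a * t) + b * c₂ * cos (b * t) := by
  have hsin (c r : ℝ) : HasDerivAt (fun t => c * sin (r * t)) (r * c * cos (r * t)) t :=
    (((hasDerivAt_id' t).const_mul r).sin.const_mul c).congr_deriv (by ring)
  exact ((hsin c₁ a).add (hsin c₂ b)).deriv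

theorem sin_intCast_div_two_mul_eq_zero_iff (d : ℤ) (hd : 0 < d) (t : ℝ) :
    sin (d / 2 * t) = 0 ↔
      ∃ k : ℤ, 0 ≤ k ∧ k ≤ d - 1 ∧ ∃ n : ℤ, t - 2 * k * π / d = n * (2 * π) := by
  have hd' : (d : ℝ) ≠ 0 := by positivity
  rw [sin_eq_zero_iff]
  constructor
  · rintro ⟨j, hj⟩
    refine ⟨j % d, Int.emod_nonneg j hd.ne', by linarith [Int.emod_lt_of_pos j hd], j / d, ?_⟩
    have hdiv : (d : ℝ) * (j / d : ℤ) + (j % d : ℤ) = j := by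
      exact_mod_cast Int.mul_ediv_add_emod j d
    have ht : t = 2 * j * π / d := by
      field_simp
      linear_combination (-2) * hj
    rw [ht]
    field_simp
    linear_combination (-1) * hdiv
  · rintro ⟨k, -, -, n, hn⟩
    refine ⟨k + n * d, ?_⟩
    have ht : t = 2 * k * π / d + n * (2 * π) := by linarith
    rw [ht]
    push_cast
    field_simp

theorem singular_points_case_negative (c₁ c₂ : ℝ) (hc₁ : c₁ ≠ 0)
    (m ℓ : ℤ) (hm : m ≠ 0) (hml : m < ℓ) (hc : (m : ℝ) * c₁ = -((ℓ : ℝ) * c₂))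
    (φ ψ : ℝ → ℝ)
    (hφ : ∀ t : ℝ, φ t = c₁ * Real.cos (m * t) + c₂ * Real.cos (ℓ * t))
    (hψ : ∀ t : ℝ, ψ t = c₁ * Real.sin (m * t) + c₂ * Real.sin (ℓ * t))
    (t : ℝ) :
    ((deriv φ t = 0 ∧ deriv ψ t = 0) ↔ Real.sin (((ℓ : ℝ) - m) / 2 * t) = 0) ∧
    (Real.sin (((ℓ : ℝ) - m) / 2 * t) = 0 ↔
      ∃ k : ℤ, 0 ≤ k ∧ k ≤ ℓ - m - 1 ∧
        ∃ n : ℤ, t - 2 * k * Real.pi / (ℓ - m) = n * (2 * Real.pi)) := by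
  have hmc : (m : ℝ) * c₁ ≠ 0 := mul_ne_zero (Int.cast_ne_zero.mpr hm) hc₁
  have hφ' : deriv φ t = m * c₁ * (sin (ℓ * t) - sin (m * t)) := by
    rw [funext hφ, deriv_const_mul_cos_add_const_mul_cos]
    linear_combination (-sin (ℓ * t)) * hc
  have hψ' : deriv ψ t = m * c₁ * (cos (m * t) - cos (ℓ * t)) := by
    rw [funext hψ, deriv_const_mul_sin_add_const_mul_sin]
    linear_combination cos (ℓ * t) * hc
  constructor
  · rw [hφ', hψ', mul_eq_zero_iff_left hmc, mul_eq_zero_iff_left hmc, sub_eq_zero, sub_eq_zero,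
      eq_comm (a := cos _), sin_eq_sin_and_cos_eq_cos_iff_sin_half_sub_eq_zero]
    congr! 2
    ring
  · simpa using sin_intCast_div_two_mul_eq_zero_iff (ℓ - m) (sub_pos.mpr hml) t
end

section
/- Let x(t) = c₁ cos(mt) + c₂ cos(ℓt), y(t) = c₁ sin(mt) + c₂ sin(ℓt), z(t) = a sin(((ℓ-m)/2)·t), with c₁ c₂ < 0 and a² = -4 c₁ c₂. Then x(t)² + y(t)² - z(t)² = (c₁ + c₂)² for all real t. -/
/-!
The planar part is the sum of two rotating vectors of lengths `c₁` and `c₂`, so its squared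
length is `c₁² + c₂² + 2 c₁ c₂ cos ((ℓ - m) t) = (c₁ + c₂)² - 4 c₁ c₂ sin² ((ℓ - m) t / 2)`,
and `a² = -4 c₁ c₂` makes the last term exactly `z(t)²`.
-/

open Real

theorem Real.cos_eq_one_sub_two_mul_sin_half_sq (θ : ℝ) : cos θ = 1 - 2 * sin (θ / 2) ^ 2 := by
  have h := cos_two_mul' (θ / 2)
  rw [mul_div_cancel₀ θ two_ne_zero] at h
  linear_combination h + sin_sq_add_cos_sq (θ / 2)

theorem Real.sum_rotations_sq (c₁ c₂ α β : ℝ) :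
    (c₁ * cos α + c₂ * cos β) ^ 2 + (c₁ * sin α + c₂ * sin β) ^ 2
      = (c₁ + c₂) ^ 2 - 4 * c₁ * c₂ * sin ((β - α) / 2) ^ 2 := by
  have h := cos_eq_one_sub_two_mul_sin_half_sq (β - α)
  rw [cos_sub] at h
  linear_combination c₁ ^ 2 * sin_sq_add_cos_sq α + c₂ ^ 2 * sin_sq_add_cos_sq β + 2 * c₁ * c₂ * h

theorem constant_precession_on_hyperboloid_general (c₁ c₂ a : ℝ) (m ℓ : ℤ)
    (ha : a ^ 2 = -(4 * c₁ * c₂)) (t : ℝ) :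
    (c₁ * Real.cos (m * t) + c₂ * Real.cos (ℓ * t)) ^ 2
      + (c₁ * Real.sin (m * t) + c₂ * Real.sin (ℓ * t)) ^ 2
      - (a * Real.sin (((ℓ : ℝ) - m) / 2 * t)) ^ 2 = (c₁ + c₂) ^ 2 := by
  have hangle : ((ℓ : ℝ) - m) / 2 * t = (ℓ * t - m * t) / 2 := by ring
  rw [sum_rotations_sq, hangle, mul_pow, ha]
  ring

theorem constant_precession_on_hyperboloid (c₁ c₂ a : ℝ) (m ℓ : ℤ)
    (hc : c₁ * c₂ < 0) (ha : a ^ 2 = -(4 * c₁ * c₂)) (t : ℝ) :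
    (c₁ * Real.cos (m * t) + c₂ * Real.cos (ℓ * t)) ^ 2
      + (c₁ * Real.sin (m * t) + c₂ * Real.sin (ℓ * t)) ^ 2
      - (a * Real.sin (((ℓ : ℝ) - m) / 2 * t)) ^ 2 = (c₁ + c₂) ^ 2 :=
  constant_precession_on_hyperboloid_general c₁ c₂ a m ℓ ha t
end

section
/- Let R > r > 0, p, q coprime positive integers, p ≥ 2. Suppose t ≢ τ (mod 2π), sin(pt) = sin(pτ), cos(pt) = cos(pτ), and cos(qt) = cos(qτ). Then there exist integers k, j with 1 ≤ k ≤ p-1 and 0 ≤ j ≤ q-1 such that t - τ ≡ 2kπ/p (mod 2π) and t + τ ≡ 2jπ/q (mod 2π). -/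
/-!
Equal sine and cosine of `p t` and `p τ` give `p (t - τ) ∈ 2πℤ`. The equation
`cos (q t) = cos (q τ)` gives `q (t - τ) ∈ 2πℤ` or `q (t + τ) ∈ 2πℤ`; the first is excluded
since, by Bézout, `p (t - τ), q (t - τ) ∈ 2πℤ` with `p, q` coprime force `t - τ ∈ 2πℤ`.
Writing `p (t - τ) = 2πm` and `q (t + τ) = 2πc`, the residues `k = m mod p` and `j = c mod q`
do the job, and `k ≠ 0` because `t - τ ∉ 2πℤ`.
-/

open Real

theorem Real.exists_sub_eq_int_mul_two_pi_of_sin_eq_of_cos_eq {x y : ℝ}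
    (hsin : sin x = sin y) (hcos : cos x = cos y) : ∃ m : ℤ, x - y = m * (2 * π) := by
  obtain ⟨m, hm⟩ := Real.Angle.angle_eq_iff_two_pi_dvd_sub.mp (Real.Angle.cos_sin_inj hcos hsin)
  exact ⟨m, by rw [hm]; ring⟩

theorem Real.exists_eq_int_mul_two_pi_of_coprime {p q : ℕ} (hpq : p.Coprime q) {x : ℝ}
    (hp : ∃ m : ℤ, p * x = m * (2 * π)) (hq : ∃ c : ℤ, q * x = c * (2 * π)) :
    ∃ n : ℤ, x = n * (2 * π) := by
  obtain ⟨m, hm⟩ := hp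
  obtain ⟨c, hc⟩ := hq
  obtain ⟨a, b, hab⟩ := Nat.isCoprime_iff_coprime.mpr hpq
  refine ⟨a * m + b * c, ?_⟩
  have hab' : (a : ℝ) * p + b * q = 1 := by exact_mod_cast hab
  calc x = a * (p * x) + b * (q * x) := by linear_combination -x * hab'
    _ = _ := by rw [hm, hc]; push_cast; ring

theorem Real.exists_sub_two_mul_emod_mul_pi_div_eq {p : ℕ} (hp : p ≠ 0) {x : ℝ} {m : ℤ}
    (h : p * x = m * (2 * π)) : ∃ n : ℤ, x - 2 * (m % p : ℤ) * π / p = n * (2 * π) := by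
  refine ⟨m / p, ?_⟩
  have hdiv : (m : ℝ) = p * (m / p : ℤ) + (m % p : ℤ) := by
    exact_mod_cast congrArg (Int.cast : ℤ → ℝ) (Int.mul_ediv_add_emod m p).symm
  have hpR : (p : ℝ) ≠ 0 := by exact_mod_cast hp
  field_simp
  linear_combination h + 2 * π * hdiv

theorem torus_knot_intersection_params_general
    (p q : ℕ) (hp : 2 ≤ p) (hq : 0 < q) (hpq : Nat.Coprime p q)
    (t τ : ℝ)
    (hne : ¬ ∃ n : ℤ, t - τ = n * (2 * Real.pi))
    (h₁ : Real.sin (p * t) = Real.sin (p * τ))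
    (h₂ : Real.cos (p * t) = Real.cos (p * τ))
    (h₃ : Real.cos (q * t) = Real.cos (q * τ)) :
    ∃ k j : ℤ, 1 ≤ k ∧ k ≤ (p : ℤ) - 1 ∧ 0 ≤ j ∧ j ≤ (q : ℤ) - 1 ∧
      (∃ n : ℤ, (t - τ) - 2 * k * Real.pi / p = n * (2 * Real.pi)) ∧
      (∃ n : ℤ, (t + τ) - 2 * j * Real.pi / q = n * (2 * Real.pi)) := by
  obtain ⟨m, hm⟩ := Real.exists_sub_eq_int_mul_two_pi_of_sin_eq_of_cos_eq h₁ h₂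
  rw [← mul_sub] at hm
  obtain ⟨c, hc | hc⟩ := Real.cos_eq_cos_iff.mp h₃
  · exact absurd (Real.exists_eq_int_mul_two_pi_of_coprime hpq ⟨m, hm⟩
      ⟨-c, by push_cast; linarith⟩) hne
  have hsum : q * (t + τ) = c * (2 * π) := by linarith
  have hk : m % p ≠ 0 := fun h0 => hne <| by
    simpa [h0] using Real.exists_sub_two_mul_emod_mul_pi_div_eq (by omega) hm
  refine ⟨m % p, c % q, ?_, ?_, Int.emod_nonneg c (by omega), ?_,
    Real.exists_sub_two_mul_emod_mul_pi_div_eq (by omega) hm,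
    Real.exists_sub_two_mul_emod_mul_pi_div_eq (by omega) hsum⟩
  · have := Int.emod_nonneg m (show (p : ℤ) ≠ 0 by omega)
    omega
  · have := Int.emod_lt_of_pos m (show (0 : ℤ) < p by omega)
    omega
  · have := Int.emod_lt_of_pos c (show (0 : ℤ) < q by omega)
    omega

theorem torus_knot_intersection_params (R r : ℝ) (hr : 0 < r) (hRr : r < R)
    (p q : ℕ) (hp : 2 ≤ p) (hq : 0 < q) (hpq : Nat.Coprime p q)
    (t τ : ℝ)
    (hne : ¬ ∃ n : ℤ, t - τ = n * (2 * Real.pi))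
    (h₁ : Real.sin (p * t) = Real.sin (p * τ))
    (h₂ : Real.cos (p * t) = Real.cos (p * τ))
    (h₃ : Real.cos (q * t) = Real.cos (q * τ)) :
    ∃ k j : ℤ, 1 ≤ k ∧ k ≤ (p : ℤ) - 1 ∧ 0 ≤ j ∧ j ≤ (q : ℤ) - 1 ∧
      (∃ n : ℤ, (t - τ) - 2 * k * Real.pi / p = n * (2 * Real.pi)) ∧
      (∃ n : ℤ, (t + τ) - 2 * j * Real.pi / q = n * (2 * Real.pi)) :=
  torus_knot_intersection_params_general p q hp hq hpq t τ hne h₁ h₂ h₃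
end
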